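/- arXiv:1611.04461 — 6 statements merged into one kernel-verified Lean document; each statement's English description precedes it below -/
import Mathlib

section
/- Let ψ₁ and ψ₂ be nontrivial solutions on an interval I of u'' + Q₁(x)u = 0 and u'' + Q₂(x)u = 0 respectively, where Q₁ and Q₂ are continuous on I and Q₁(x) > Q₂(x) for all x in I. Then between any two consecutive zeros x₁ < x₂ of ψ₂ in I, ψ₁ vanishes at least once; i.e., there exists c ∈ (x₁, x₂) with ψ₁(c) = 0. -/
/-- A continuous function with no zeros on an open interval has constant sign there. -/
lemma sturm_sign_const {f : ℝ → ℝ} {a b : ℝ} (hab : a < b)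
    (hc : ContinuousOn f (Set.Icc a b)) (hne : ∀ x ∈ Set.Ioo a b, f x ≠ 0) :
    (∀ x ∈ Set.Ioo a b, 0 < f x) ∨ (∀ x ∈ Set.Ioo a b, f x < 0) := by
  set m := (a + b) / 2 with hm
  have hmI : m ∈ Set.Ioo a b := ⟨by linarith, by linarith⟩
  have key : ∀ x ∈ Set.Ioo a b, ∀ y ∈ Set.Ioo a b, 0 < f x → f y < 0 → False := by
    intro x hx y hy hfx hfy
    rcases le_total x y with hxy | hxy
    · have hsub : Set.Icc x y ⊆ Set.Icc a b :=
        Set.Icc_subset_Icc hx.1.le hy.2.le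
      have := intermediate_value_Icc' hxy (hc.mono hsub)
      have h0 : (0 : ℝ) ∈ Set.Icc (f y) (f x) := ⟨hfy.le, hfx.le⟩
      obtain ⟨z, hz, hz0⟩ := this h0
      exact hne z ⟨lt_of_lt_of_le hx.1 hz.1, lt_of_le_of_lt hz.2 hy.2⟩ hz0
    · have hsub : Set.Icc y x ⊆ Set.Icc a b :=
        Set.Icc_subset_Icc hy.1.le hx.2.le
      have := intermediate_value_Icc hxy (hc.mono hsub)
      have h0 : (0 : ℝ) ∈ Set.Icc (f y) (f x) := ⟨hfy.le, hfx.le⟩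
      obtain ⟨z, hz, hz0⟩ := this h0
      exact hne z ⟨lt_of_lt_of_le hy.1 hz.1, lt_of_le_of_lt hz.2 hx.2⟩ hz0
  rcases (hne m hmI).lt_or_gt with hneg | hpos
  · right
    intro x hx
    rcases (hne x hx).lt_or_gt with h | h
    · exact h
    · exact absurd (key x hx m hmI h hneg) (fun h => h)
  · left
    intro x hx
    rcases (hne x hx).lt_or_gt with h | h
    · exact absurd (key m hmI x hx hpos h) (fun h => h)
    · exact h

/-- The derivative at the left endpoint of a zero which is a one-sided minimum is ≥ 0. -/
lemma sturm_deriv_nonneg_right {f : ℝ → ℝ} {a b d : ℝ} (hab : a < b)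
    (hd : HasDerivAt f d a) (h0 : f a = 0)
    (hpos : ∀ x ∈ Set.Ioo a b, 0 ≤ f x) : 0 ≤ d := by
  have ht : Filter.Tendsto (slope f a) (nhdsWithin a (Set.Ioi a)) (nhds d) :=
    (hasDerivAt_iff_tendsto_slope.mp hd).mono_left
      (nhdsWithin_mono a (fun x hx => Set.mem_compl_singleton_iff.mpr (ne_of_gt hx)))
  refine ge_of_tendsto ht ?_
  filter_upwards [Ioo_mem_nhdsGT_of_mem (Set.mem_Ico.mpr ⟨le_refl a, hab⟩)] with x hx
  have hxa : a < x := hx.1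
  have : slope f a x = (f x - f a) / (x - a) := by
    simp [slope_def_field]
  rw [this, h0, sub_zero]
  exact div_nonneg (hpos x hx) (by linarith)

/-- The derivative at the right endpoint of a zero which is a one-sided minimum is ≤ 0. -/
lemma sturm_deriv_nonpos_left {f : ℝ → ℝ} {a b d : ℝ} (hab : a < b)
    (hd : HasDerivAt f d b) (h0 : f b = 0)
    (hpos : ∀ x ∈ Set.Ioo a b, 0 ≤ f x) : d ≤ 0 := by
  have ht : Filter.Tendsto (slope f b) (nhdsWithin b (Set.Iio b)) (nhds d) :=
    (hasDerivAt_iff_tendsto_slope.mp hd).mono_left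
      (nhdsWithin_mono b (fun x hx => Set.mem_compl_singleton_iff.mpr (ne_of_lt hx)))
  refine le_of_tendsto ht ?_
  filter_upwards [Ioo_mem_nhdsLT_of_mem (Set.mem_Ioc.mpr ⟨hab, le_refl b⟩)] with x hx
  have hxb : x < b := hx.2
  have : slope f b x = (f x - f b) / (x - b) := by
    simp [slope_def_field]
  rw [this, h0, sub_zero]
  exact div_nonpos_of_nonneg_of_nonpos (hpos x hx) (by linarith)

/-- A function nonneg on an open interval, continuous at the left endpoint, is nonneg there. -/
lemma sturm_nonneg_left {f : ℝ → ℝ} {a b : ℝ} (hab : a < b)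
    (hc : ContinuousAt f a) (hpos : ∀ x ∈ Set.Ioo a b, 0 ≤ f x) : 0 ≤ f a := by
  have hne : (nhdsWithin a (Set.Ioo a b)).NeBot := by
    apply mem_closure_iff_nhdsWithin_neBot.mp
    rw [closure_Ioo (ne_of_lt hab)]
    exact ⟨le_refl a, hab.le⟩
  have ht : Filter.Tendsto f (nhdsWithin a (Set.Ioo a b)) (nhds (f a)) :=
    (hc.continuousWithinAt (s := Set.Ioo a b)).tendsto
  exact ge_of_tendsto ht
    (Filter.eventually_of_mem self_mem_nhdsWithin (fun x hx => hpos x hx))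

/-- ditto at the right endpoint. -/
lemma sturm_nonneg_right {f : ℝ → ℝ} {a b : ℝ} (hab : a < b)
    (hc : ContinuousAt f b) (hpos : ∀ x ∈ Set.Ioo a b, 0 ≤ f x) : 0 ≤ f b := by
  have hne : (nhdsWithin b (Set.Ioo a b)).NeBot := by
    apply mem_closure_iff_nhdsWithin_neBot.mp
    rw [closure_Ioo (ne_of_lt hab)]
    exact ⟨hab.le, le_refl b⟩
  have ht : Filter.Tendsto f (nhdsWithin b (Set.Ioo a b)) (nhds (f b)) :=
    (hc.continuousWithinAt (s := Set.Ioo a b)).tendsto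
  exact ge_of_tendsto ht
    (Filter.eventually_of_mem self_mem_nhdsWithin (fun x hx => hpos x hx))

/-- Sturm's Comparison Theorem. -/
theorem sturm_comparison (I : Set ℝ) (hI : I.OrdConnected)
    (Q₁ Q₂ ψ₁ ψ₂ : ℝ → ℝ)
    (hQ₁c : ContinuousOn Q₁ I) (hQ₂c : ContinuousOn Q₂ I)
    (hlt : ∀ x ∈ I, Q₂ x < Q₁ x)
    (hψ₁d : ∀ x ∈ I, DifferentiableAt ℝ ψ₁ x ∧ DifferentiableAt ℝ (deriv ψ₁) x)
    (hψ₂d : ∀ x ∈ I, DifferentiableAt ℝ ψ₂ x ∧ DifferentiableAt ℝ (deriv ψ₂) x)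
    (hode₁ : ∀ x ∈ I, deriv (deriv ψ₁) x + Q₁ x * ψ₁ x = 0)
    (hode₂ : ∀ x ∈ I, deriv (deriv ψ₂) x + Q₂ x * ψ₂ x = 0)
    (hnt₁ : ∃ x ∈ I, ψ₁ x ≠ 0) (hnt₂ : ∃ x ∈ I, ψ₂ x ≠ 0)
    (x₁ x₂ : ℝ) (hx₁ : x₁ ∈ I) (hx₂ : x₂ ∈ I) (h12 : x₁ < x₂)
    (hz₁ : ψ₂ x₁ = 0) (hz₂ : ψ₂ x₂ = 0)
    (hcons : ∀ x ∈ Set.Ioo x₁ x₂, ψ₂ x ≠ 0) :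
    ∃ c ∈ Set.Ioo x₁ x₂, ψ₁ c = 0 := by
  by_contra hcon
  push_neg at hcon
  have hsub : Set.Icc x₁ x₂ ⊆ I := hI.out hx₁ hx₂
  have hIoo : Set.Ioo x₁ x₂ ⊆ I := fun x hx => hsub ⟨hx.1.le, hx.2.le⟩
  -- constant signs
  have hc₁ : ContinuousOn ψ₁ (Set.Icc x₁ x₂) :=
    fun x hx => ((hψ₁d x (hsub hx)).1.continuousAt).continuousWithinAt
  have hc₂ : ContinuousOn ψ₂ (Set.Icc x₁ x₂) :=
    fun x hx => ((hψ₂d x (hsub hx)).1.continuousAt).continuousWithinAt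
  obtain ⟨s₁, hs₁sq, hφ₁⟩ : ∃ s : ℝ, s * s = 1 ∧ ∀ x ∈ Set.Ioo x₁ x₂, 0 < s * ψ₁ x := by
    rcases sturm_sign_const h12 hc₁ hcon with h | h
    · exact ⟨1, by norm_num, fun x hx => by simpa using h x hx⟩
    · exact ⟨-1, by norm_num, fun x hx => by simpa using h x hx⟩
  obtain ⟨s₂, hs₂sq, hφ₂⟩ : ∃ s : ℝ, s * s = 1 ∧ ∀ x ∈ Set.Ioo x₁ x₂, 0 < s * ψ₂ x := by
    rcases sturm_sign_const h12 hc₂ hcons with h | h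
    · exact ⟨1, by norm_num, fun x hx => by simpa using h x hx⟩
    · exact ⟨-1, by norm_num, fun x hx => by simpa using h x hx⟩
  -- the (scaled) Wronskian
  set V : ℝ → ℝ := fun x => (s₁ * s₂) * (ψ₁ x * deriv ψ₂ x - deriv ψ₁ x * ψ₂ x) with hV
  have hVd : ∀ x ∈ I, HasDerivAt V
      ((s₁ * s₂) * ((Q₁ x - Q₂ x) * (ψ₁ x * ψ₂ x))) x := by
    intro x hx
    obtain ⟨h1, h1'⟩ := hψ₁d x hx
    obtain ⟨h2, h2'⟩ := hψ₂d x hx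
    have hW : HasDerivAt (fun y => ψ₁ y * deriv ψ₂ y - deriv ψ₁ y * ψ₂ y)
        ((deriv ψ₁ x * deriv ψ₂ x + ψ₁ x * deriv (deriv ψ₂) x) -
          (deriv (deriv ψ₁) x * ψ₂ x + deriv ψ₁ x * deriv ψ₂ x)) x :=
      ((h1.hasDerivAt.mul h2'.hasDerivAt).sub (h1'.hasDerivAt.mul h2.hasDerivAt))
    have e₁ : deriv (deriv ψ₁) x = -(Q₁ x * ψ₁ x) := by linarith [hode₁ x hx]
    have e₂ : deriv (deriv ψ₂) x = -(Q₂ x * ψ₂ x) := by linarith [hode₂ x hx]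
    have := hW.const_mul (s₁ * s₂)
    refine this.congr_deriv ?_
    rw [e₁, e₂]; ring
  have hVc : ContinuousOn V (Set.Icc x₁ x₂) :=
    fun x hx => ((hVd x (hsub hx)).differentiableAt.continuousAt).continuousWithinAt
  have hVpos : ∀ x ∈ interior (Set.Icc x₁ x₂), 0 < deriv V x := by
    intro x hx
    rw [interior_Icc] at hx
    rw [(hVd x (hIoo hx)).deriv]
    have h1 := hφ₁ x hx
    have h2 := hφ₂ x hx
    have h3 : Q₂ x < Q₁ x := hlt x (hIoo hx)
    nlinarith [mul_pos h1 h2]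
  have hmono : StrictMonoOn V (Set.Icc x₁ x₂) :=
    strictMonoOn_of_deriv_pos (convex_Icc x₁ x₂) hVc hVpos
  have hVlt : V x₁ < V x₂ :=
    hmono ⟨le_refl x₁, h12.le⟩ ⟨h12.le, le_refl x₂⟩ h12
  -- endpoint sign facts
  have hφ₂nn : ∀ x ∈ Set.Ioo x₁ x₂, 0 ≤ s₂ * ψ₂ x := fun x hx => (hφ₂ x hx).le
  have hd₂₁ : 0 ≤ s₂ * deriv ψ₂ x₁ := by
    have := ((hψ₂d x₁ hx₁).1.hasDerivAt.const_mul s₂)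
    refine sturm_deriv_nonneg_right h12 this ?_ hφ₂nn
    simp [hz₁]
  have hd₂₂ : s₂ * deriv ψ₂ x₂ ≤ 0 := by
    have := ((hψ₂d x₂ hx₂).1.hasDerivAt.const_mul s₂)
    refine sturm_deriv_nonpos_left h12 this ?_ hφ₂nn
    simp [hz₂]
  have hφ₁nn : ∀ x ∈ Set.Ioo x₁ x₂, 0 ≤ s₁ * ψ₁ x := fun x hx => (hφ₁ x hx).le
  have hψ₁x₁ : 0 ≤ s₁ * ψ₁ x₁ :=
    sturm_nonneg_left (f := fun x => s₁ * ψ₁ x) h12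
      ((hψ₁d x₁ hx₁).1.const_mul s₁).continuousAt hφ₁nn
  have hψ₁x₂ : 0 ≤ s₁ * ψ₁ x₂ :=
    sturm_nonneg_right (f := fun x => s₁ * ψ₁ x) h12
      ((hψ₁d x₂ hx₂).1.const_mul s₁).continuousAt hφ₁nn
  -- conclude
  have hV₁ : 0 ≤ V x₁ := by
    have : V x₁ = (s₁ * ψ₁ x₁) * (s₂ * deriv ψ₂ x₁) := by
      simp only [hV, hz₁]; ring
    rw [this]
    exact mul_nonneg hψ₁x₁ hd₂₁
  have hV₂ : V x₂ ≤ 0 := by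
    have : V x₂ = (s₁ * ψ₁ x₂) * (s₂ * deriv ψ₂ x₂) := by
      simp only [hV, hz₂]; ring
    rw [this]
    exact mul_nonpos_of_nonneg_of_nonpos hψ₁x₂ hd₂₂
  linarith
end

section
/- Suppose b is continuously differentiable and c continuous on [a, ∞), and Q(x) = -(1/4)(b(x)² - 4c(x) + 2b'(x)) satisfies Q(x) ≥ ε² for some ε > 0 and all x ≥ a. Then every nontrivial solution ψ of y'' + b(x)y' + c(x)y = 0 has infinitely many zeros in [a, ∞). -/
/-!
Where ψ has no zeros, `g = ψ'/ψ + b/2` satisfies the Riccati equation `g' = -g² - Q`, so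
`g' ≤ -(g² + ε²)`. Then `arctan (g/ε)` decreases at rate at least `ε`, which a function
with values in `(-π/2, π/2)` cannot do on an unbounded interval. Hence the zeros of ψ are
not bounded above.
-/

open Real Set

theorem hasDerivAt_riccati_of_ode {ψ ψ' b : ℝ → ℝ} {ψ'' b' c x : ℝ}
    (hψ : HasDerivAt ψ (ψ' x) x) (hψ' : HasDerivAt ψ' ψ'' x) (hb : HasDerivAt b b' x)
    (hx : ψ x ≠ 0) (hode : ψ'' + b x * ψ' x + c * ψ x = 0) :
    HasDerivAt (fun y => ψ' y / ψ y + b y / 2)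
      (-(ψ' x / ψ x + b x / 2) ^ 2 - (c - b x ^ 2 / 4 - b' / 2)) x := by
  refine ((hψ'.div hψ hx).add (hb.div_const 2)).congr_deriv ?_
  rw [show ψ'' = -(b x * ψ' x + c * ψ x) by linarith]
  field_simp
  ring

theorem false_of_hasDerivAt_le_neg_sq_add_sq {g g' : ℝ → ℝ} {X ε : ℝ} (hε : 0 < ε)
    (hg : ∀ x, X < x → HasDerivAt g (g' x) x)
    (hle : ∀ x, X < x → g' x ≤ -(g x ^ 2 + ε ^ 2)) : False := by
  set θ : ℝ → ℝ := fun x => arctan (g x / ε) + x * ε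
  have hθ : ∀ x, X < x → HasDerivAt θ (1 / (1 + (g x / ε) ^ 2) * (g' x / ε) + ε) x :=
    fun x hx => ((hg x hx).div_const ε).arctan.add (hasDerivAt_mul_const ε)
  have hθ_anti : AntitoneOn θ (Ioi X) := by
    refine antitoneOn_of_hasDerivWithinAt_nonpos (convex_Ioi X)
      (fun x hx => (hθ x hx).continuousAt.continuousWithinAt)
      (fun x hx => (hθ x (interior_Ioi.subset hx)).hasDerivWithinAt) fun x hx => ?_
    have hx : X < x := interior_Ioi.subset hx
    have hden : 0 < ε ^ 2 + g x ^ 2 := by positivity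
    have : 1 / (1 + (g x / ε) ^ 2) * (g' x / ε) = ε * g' x / (ε ^ 2 + g x ^ 2) := by
      field_simp
    rw [this, div_add' _ _ _ hden.ne', div_nonpos_iff]
    right
    exact ⟨by nlinarith [hle x hx], hden.le⟩
  set u := X + 1
  set v := u + π / ε
  have huv : u ≤ v := le_add_of_nonneg_right (by positivity)
  have hdecay : θ v ≤ θ u := hθ_anti (by simp [u]) (by simp only [mem_Ioi]; linarith) huv
  have hεv : v * ε = u * ε + π := by simp only [v]; field_simp
  simp only [θ, hεv] at hdecay
  linarith [neg_pi_div_two_lt_arctan (g v / ε), arctan_lt_pi_div_two (g u / ε)]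

theorem oscillation_general_general (b c ψ : ℝ → ℝ) (a ε : ℝ) (hε : 0 < ε)
    (hb : ContDiff ℝ 1 b)
    (hQ : ∀ x, a ≤ x → ε ^ 2 ≤ -(1/4) * (b x ^ 2 - 4 * c x + 2 * deriv b x))
    (hψd : Differentiable ℝ ψ) (hψd' : Differentiable ℝ (deriv ψ))
    (hode : ∀ x, a ≤ x → deriv (deriv ψ) x + b x * deriv ψ x + c x * ψ x = 0) :
    {x | a ≤ x ∧ ψ x = 0}.Infinite := by
  intro hfin
  obtain ⟨M, hM⟩ := hfin.bddAbove
  have ha : ∀ x, max a M < x → a ≤ x := fun x hx => (le_max_left a M).trans hx.le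
  have hψ_ne : ∀ x, max a M < x → ψ x ≠ 0 := fun x hx h0 =>
    (lt_of_le_of_lt (le_max_right a M) hx).not_ge (hM ⟨ha x hx, h0⟩)
  refine false_of_hasDerivAt_le_neg_sq_add_sq hε (fun x hx => hasDerivAt_riccati_of_ode
    (hψd x).hasDerivAt (hψd' x).hasDerivAt ((hb.differentiable one_ne_zero) x).hasDerivAt
    (hψ_ne x hx) (hode x (ha x hx))) fun x hx => ?_
  linarith [hQ x (ha x hx)]

/-- Theorem 2.2: if Q = -(1/4)(b² - 4c + 2b') ≥ ε² on [a,∞) then every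
nontrivial solution of y'' + b y' + c y = 0 oscillates on [a,∞). -/
theorem oscillation_general (b c ψ : ℝ → ℝ) (a ε : ℝ) (hε : 0 < ε)
    (hb : ContDiff ℝ 1 b) (hc : ContinuousOn c (Set.Ici a))
    (hQ : ∀ x, a ≤ x → ε ^ 2 ≤ -(1/4) * (b x ^ 2 - 4 * c x + 2 * deriv b x))
    (hψd : Differentiable ℝ ψ) (hψd' : Differentiable ℝ (deriv ψ))
    (hode : ∀ x, a ≤ x → deriv (deriv ψ) x + b x * deriv ψ x + c x * ψ x = 0)
    (hnt : ∃ x, a ≤ x ∧ ψ x ≠ 0) :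
    {x | a ≤ x ∧ ψ x = 0}.Infinite :=
  oscillation_general_general b c ψ a ε hε hb hQ hψd hψd' hode
end

section
/- Let D(x) = b(x)² - 4c(x) + 2b'(x). If D(x) > 0 for all x in an interval I, then any nontrivial solution ψ of y'' + b(x)y' + c(x)y = 0 has at most one zero in I. -/
open Set Real

set_option maxHeartbeats 1000000

/-- One-sided Gronwall: nonnegative `E` with `E' ≤ K E` and `E a = 0` vanishes at `b ≥ a`. -/
private lemma gronwall_right {E E' : ℝ → ℝ} {a b K : ℝ} (hab : a ≤ b)
    (hcont : ContinuousOn E (Set.Icc a b))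
    (hd : ∀ t ∈ Set.Ioo a b, HasDerivAt E (E' t) t)
    (hpos : ∀ t ∈ Set.Icc a b, 0 ≤ E t)
    (hbound : ∀ t ∈ Set.Ioo a b, E' t ≤ K * E t)
    (ha : E a = 0) : E b = 0 := by
  set G : ℝ → ℝ := fun t => E t * Real.exp (-K * t) with hG
  have hGd : ∀ t ∈ Set.Ioo a b, HasDerivAt G ((E' t - K * E t) * Real.exp (-K * t)) t := by
    intro t ht
    have h2 : HasDerivAt (fun s : ℝ => Real.exp (-K * s)) (Real.exp (-K * t) * (-K)) t := by
      simpa using ((hasDerivAt_id t).const_mul (-K)).exp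
    have := (hd t ht).mul h2
    exact this.congr_deriv (by ring)
  have hanti : AntitoneOn G (Set.Icc a b) := by
    apply antitoneOn_of_deriv_nonpos (convex_Icc a b)
    · exact hcont.mul (Real.continuous_exp.comp (continuous_const.mul continuous_id)).continuousOn
    · intro t ht
      rw [interior_Icc] at ht
      exact (hGd t ht).differentiableAt.differentiableWithinAt
    · intro t ht
      rw [interior_Icc] at ht
      rw [(hGd t ht).deriv]
      have h1 : E' t - K * E t ≤ 0 := by linarith [hbound t ht]
      exact mul_nonpos_of_nonpos_of_nonneg h1 (Real.exp_pos _).le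
  have hGb : G b ≤ G a := hanti (Set.left_mem_Icc.2 hab) (Set.right_mem_Icc.2 hab) hab
  have hGa : G a = 0 := by simp [hG, ha]
  have : E b * Real.exp (-K * b) ≤ 0 := by rw [← hGa]; exact hGb
  have hEb := hpos b (Set.right_mem_Icc.2 hab)
  nlinarith [Real.exp_pos (-K * b)]

/-- One-sided Gronwall, backwards: nonnegative `E` with `-(K E) ≤ E'` and `E b = 0`
vanishes at `a ≤ b`. -/
private lemma gronwall_left {E E' : ℝ → ℝ} {a b K : ℝ} (hab : a ≤ b)
    (hcont : ContinuousOn E (Set.Icc a b))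
    (hd : ∀ t ∈ Set.Ioo a b, HasDerivAt E (E' t) t)
    (hpos : ∀ t ∈ Set.Icc a b, 0 ≤ E t)
    (hbound : ∀ t ∈ Set.Ioo a b, -(K * E t) ≤ E' t)
    (hb : E b = 0) : E a = 0 := by
  set G : ℝ → ℝ := fun t => E t * Real.exp (K * t) with hG
  have hGd : ∀ t ∈ Set.Ioo a b, HasDerivAt G ((E' t + K * E t) * Real.exp (K * t)) t := by
    intro t ht
    have h2 : HasDerivAt (fun s : ℝ => Real.exp (K * s)) (Real.exp (K * t) * K) t := by
      simpa using ((hasDerivAt_id t).const_mul K).exp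
    have := (hd t ht).mul h2
    exact this.congr_deriv (by ring)
  have hmono : MonotoneOn G (Set.Icc a b) := by
    apply monotoneOn_of_deriv_nonneg (convex_Icc a b)
    · exact hcont.mul (Real.continuous_exp.comp (continuous_const.mul continuous_id)).continuousOn
    · intro t ht
      rw [interior_Icc] at ht
      exact (hGd t ht).differentiableAt.differentiableWithinAt
    · intro t ht
      rw [interior_Icc] at ht
      rw [(hGd t ht).deriv]
      have h1 : 0 ≤ E' t + K * E t := by linarith [hbound t ht]
      exact mul_nonneg h1 (Real.exp_pos _).le
  have hGa : G a ≤ G b := hmono (Set.left_mem_Icc.2 hab) (Set.right_mem_Icc.2 hab) hab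
  have hGb : G b = 0 := by simp [hG, hb]
  have : E a * Real.exp (K * a) ≤ 0 := by rw [← hGb]; exact hGa
  have hEa := hpos a (Set.left_mem_Icc.2 hab)
  nlinarith [Real.exp_pos (K * a)]

/-- Discriminant non-oscillation test: D = b² - 4c + 2b' > 0 on I implies any
nontrivial solution has at most one zero in I. -/
theorem discriminant_nonoscillation (I : Set ℝ) (hI : I.OrdConnected)
    (b c ψ : ℝ → ℝ)
    (hb : ContDiff ℝ 1 b) (hc : ContinuousOn c I)
    (hD : ∀ x ∈ I, 0 < b x ^ 2 - 4 * c x + 2 * deriv b x)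
    (hψd : Differentiable ℝ ψ) (hψd' : Differentiable ℝ (deriv ψ))
    (hode : ∀ x ∈ I, deriv (deriv ψ) x + b x * deriv ψ x + c x * ψ x = 0)
    (hnt : ∃ x ∈ I, ψ x ≠ 0) :
    {x ∈ I | ψ x = 0}.Subsingleton := by
  have hbc : Continuous b := hb.continuous
  have hb'c : Continuous (deriv b) := hb.continuous_deriv le_rfl
  have hbd : ∀ t, HasDerivAt b (deriv b t) t := fun t =>
    ((hb.differentiable one_ne_zero) t).hasDerivAt
  -- antiderivative of b/2
  set B : ℝ → ℝ := fun x => (∫ t in (0:ℝ)..x, b t) / 2 with hBdef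
  have hB : ∀ x, HasDerivAt B (b x / 2) x := by
    intro x
    have h1 : HasDerivAt (fun x => ∫ t in (0:ℝ)..x, b t) (b x) x :=
      intervalIntegral.integral_hasDerivAt_right (hbc.intervalIntegrable _ _)
        (hbc.stronglyMeasurable.stronglyMeasurableAtFilter) hbc.continuousAt
    exact h1.div_const 2
  have hBcont : Continuous B := by
    have : Differentiable ℝ B := fun x => (hB x).differentiableAt
    exact this.continuous
  set u : ℝ → ℝ := fun x => Real.exp (B x) * ψ x with hudef
  set v : ℝ → ℝ := fun x => Real.exp (B x) * (deriv ψ x + b x / 2 * ψ x) with hvdef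
  have hu : ∀ t, HasDerivAt u (v t) t := by
    intro t
    have h1 : HasDerivAt (fun x => Real.exp (B x)) (Real.exp (B t) * (b t / 2)) t := (hB t).exp
    have h2 := h1.mul (hψd t).hasDerivAt
    refine HasDerivAt.congr_deriv h2 ?_
    simp only [hvdef]
    ring
  have hucont : Continuous u := by
    have : Differentiable ℝ u := fun t => (hu t).differentiableAt
    exact this.continuous
  have hvcont : Continuous v :=
    (Real.continuous_exp.comp hBcont).mul
      (hψd'.continuous.add ((hbc.div_const 2).mul hψd.continuous))
  set q : ℝ → ℝ := fun x => (b x ^ 2 - 4 * c x + 2 * deriv b x) / 4 with hqdef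
  have hqpos : ∀ t ∈ I, 0 < q t := fun t ht => by
    simp only [hqdef]; linarith [hD t ht]
  have hqc : ContinuousOn q I := by
    apply ContinuousOn.div_const
    exact (((hbc.pow 2).continuousOn.sub (hc.const_smul (4:ℝ))).add
      ((hb'c.const_smul (2:ℝ)).continuousOn))
  have hv : ∀ t ∈ I, HasDerivAt v (q t * u t) t := by
    intro t ht
    have h1 : HasDerivAt (fun x => Real.exp (B x)) (Real.exp (B t) * (b t / 2)) t := (hB t).exp
    have h2 : HasDerivAt (fun x => deriv ψ x + b x / 2 * ψ x)
        (deriv (deriv ψ) t + ((deriv b t / 2) * ψ t + b t / 2 * deriv ψ t)) t :=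
      (hψd' t).hasDerivAt.add (((hbd t).div_const 2).mul (hψd t).hasDerivAt)
    have h3 := h1.mul h2
    refine HasDerivAt.congr_deriv h3 ?_
    have h4 : deriv (deriv ψ) t = -(b t * deriv ψ t) - c t * ψ t := by
      linarith [hode t ht]
    simp only [hqdef, hudef, h4]
    ring
  -- key claim: no two zeros
  have key : ∀ x y, x ∈ I → y ∈ I → ψ x = 0 → ψ y = 0 → x < y → False := by
    intro x y hxI hyI hψx hψy hxy
    have hux : u x = 0 := by simp [hudef, hψx]
    have huy : u y = 0 := by simp [hudef, hψy]
    have hIcc : Set.Icc x y ⊆ I := hI.out hxI hyI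
    -- h = u * v is monotone on [x, y]
    set h : ℝ → ℝ := fun t => u t * v t with hhdef
    have hhd : ∀ t ∈ I, HasDerivAt h (v t ^ 2 + q t * u t ^ 2) t := by
      intro t ht
      have := (hu t).mul (hv t ht)
      refine HasDerivAt.congr_deriv this ?_
      ring
    have hhmono : MonotoneOn h (Set.Icc x y) := by
      apply monotoneOn_of_deriv_nonneg (convex_Icc x y)
      · exact (hucont.mul hvcont).continuousOn
      · intro t ht
        rw [interior_Icc] at ht
        exact (hhd t (hIcc (Set.Ioo_subset_Icc_self ht))).differentiableAt.differentiableWithinAt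
      · intro t ht
        rw [interior_Icc] at ht
        have htI := hIcc (Set.Ioo_subset_Icc_self ht)
        rw [(hhd t htI).deriv]
        nlinarith [hqpos t htI, sq_nonneg (v t), sq_nonneg (u t)]
    have hh0 : ∀ t ∈ Set.Icc x y, h t = 0 := by
      intro t ht
      have h1 : h x ≤ h t := hhmono (Set.left_mem_Icc.2 hxy.le) ht ht.1
      have h2 : h t ≤ h y := hhmono ht (Set.right_mem_Icc.2 hxy.le) ht.2
      have hhx : h x = 0 := by simp [hhdef, hux]
      have hhy : h y = 0 := by simp [hhdef, huy]
      linarith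
    -- u² is constant (=0) on [x,y]
    have hu0 : ∀ t ∈ Set.Icc x y, u t = 0 := by
      have hmono : MonotoneOn (fun t => u t ^ 2) (Set.Icc x y) := by
        apply monotoneOn_of_deriv_nonneg (convex_Icc x y)
        · exact ((hucont.pow 2)).continuousOn
        · intro t ht
          exact ((hu t).differentiableAt.pow 2).differentiableWithinAt
        · intro t ht
          rw [interior_Icc] at ht
          have : HasDerivAt (fun t => u t ^ 2) (2 * u t * v t) t := by
            have := ((hu t).pow 2)
            refine HasDerivAt.congr_deriv this ?_
            ring
          rw [this.deriv]
          have := hh0 t (Set.Ioo_subset_Icc_self ht)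
          simp only [hhdef] at this
          nlinarith
      have hanti : AntitoneOn (fun t => u t ^ 2) (Set.Icc x y) := by
        apply antitoneOn_of_deriv_nonpos (convex_Icc x y)
        · exact ((hucont.pow 2)).continuousOn
        · intro t ht
          exact ((hu t).differentiableAt.pow 2).differentiableWithinAt
        · intro t ht
          rw [interior_Icc] at ht
          have : HasDerivAt (fun t => u t ^ 2) (2 * u t * v t) t := by
            have := ((hu t).pow 2)
            refine HasDerivAt.congr_deriv this ?_
            ring
          rw [this.deriv]
          have := hh0 t (Set.Ioo_subset_Icc_self ht)
          simp only [hhdef] at this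
          nlinarith
      intro t ht
      have h1 : u t ^ 2 ≤ u x ^ 2 := hanti (Set.left_mem_Icc.2 hxy.le) ht ht.1
      have h2 : u x ^ 2 ≤ u t ^ 2 := hmono (Set.left_mem_Icc.2 hxy.le) ht ht.1
      have : u t ^ 2 = 0 := by rw [hux] at h1 h2; nlinarith
      exact pow_eq_zero_iff (n := 2) (by norm_num) |>.mp this
    -- v vanishes at both endpoints
    have hvx : v x = 0 := by
      have h1 : HasDerivWithinAt u (v x) (Set.Icc x y) x := (hu x).hasDerivWithinAt
      have h2 : HasDerivWithinAt u 0 (Set.Icc x y) x := by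
        apply (hasDerivWithinAt_const x (Set.Icc x y) (0:ℝ)).congr
        · intro t ht; exact hu0 t ht
        · exact hux
      exact ((uniqueDiffOn_Icc hxy) x (Set.left_mem_Icc.2 hxy.le)).eq_deriv _ h1 h2
    have hvy : v y = 0 := by
      have h1 : HasDerivWithinAt u (v y) (Set.Icc x y) y := (hu y).hasDerivWithinAt
      have h2 : HasDerivWithinAt u 0 (Set.Icc x y) y := by
        apply (hasDerivWithinAt_const y (Set.Icc x y) (0:ℝ)).congr
        · intro t ht; exact hu0 t ht
        · exact huy
      exact ((uniqueDiffOn_Icc hxy) y (Set.right_mem_Icc.2 hxy.le)).eq_deriv _ h1 h2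
    -- nontrivial point
    obtain ⟨z, hzI, hψz⟩ := hnt
    have huz : u z ≠ 0 := by
      simp only [hudef]
      exact mul_ne_zero (Real.exp_ne_zero _) hψz
    -- energy
    set E : ℝ → ℝ := fun t => u t ^ 2 + v t ^ 2 with hEdef
    set E' : ℝ → ℝ := fun t => 2 * (1 + q t) * (u t * v t) with hE'def
    have hEd : ∀ t ∈ I, HasDerivAt E (E' t) t := by
      intro t ht
      have := ((hu t).pow 2).add ((hv t ht).pow 2)
      refine HasDerivAt.congr_deriv this ?_
      simp only [hE'def]
      push_cast
      ring
    have hEpos : ∀ t, 0 ≤ E t := fun t => by positivity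
    have hEcont : Continuous E := (hucont.pow 2).add (hvcont.pow 2)
    have hEbound : ∀ a d K : ℝ, Set.Icc a d ⊆ I → (∀ t ∈ Set.Icc a d, |q t| ≤ K) →
        ∀ t ∈ Set.Ioo a d, |E' t| ≤ (1 + K) * E t := by
      intro a d K hsub hK t ht
      have htI := hsub (Set.Ioo_subset_Icc_self ht)
      have h1 : |q t| ≤ K := hK t (Set.Ioo_subset_Icc_self ht)
      have e1 : |E' t| = |1 + q t| * (2 * (|u t| * |v t|)) := by
        simp only [hE'def, abs_mul]
        rw [abs_of_nonneg (by norm_num : (0:ℝ) ≤ 2)]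
        ring
      have e2 : |1 + q t| ≤ 1 + K := by
        calc |1 + q t| ≤ |(1:ℝ)| + |q t| := abs_add_le 1 (q t)
        _ ≤ 1 + K := by rw [abs_one]; linarith
      have e3 : 2 * (|u t| * |v t|) ≤ E t := by
        show 2 * (|u t| * |v t|) ≤ u t ^ 2 + v t ^ 2
        nlinarith [sq_nonneg (|u t| - |v t|), sq_abs (u t), sq_abs (v t)]
      rw [e1]
      have hEt := hEpos t
      have h2l : (0:ℝ) ≤ 2 * (|u t| * |v t|) := by positivity
      nlinarith [abs_nonneg (1 + q t)]
    -- z ∉ [x,y] since u = 0 there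
    rcases le_or_gt z y with hzy | hzy
    · rcases le_or_gt x z with hxz | hxz
      · exact huz (hu0 z ⟨hxz, hzy⟩)
      · -- z < x : backward Gronwall on [z, x]
        have hIcc2 : Set.Icc z x ⊆ I := hI.out hzI hxI
        obtain ⟨K, hK⟩ := (isCompact_Icc (a := z) (b := x)).exists_bound_of_continuousOn
          (hqc.mono hIcc2)
        have hEx : E x = 0 := by simp [hEdef, hux, hvx]
        have hEz : E z = 0 := by
          refine gronwall_left (E' := E') (K := 1 + K) hxz.le (hEcont.continuousOn)
            (fun t ht => hEd t (hIcc2 (Set.Ioo_subset_Icc_self ht)))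
            (fun t _ => hEpos t) (fun t ht => ?_) hEx
          have := hEbound z x K hIcc2 hK t ht
          have h2 := neg_abs_le (E' t)
          linarith
        have : u z = 0 := by
          simp only [hEdef] at hEz
          nlinarith [sq_nonneg (u z), sq_nonneg (v z)]
        exact huz this
    · -- y < z : forward Gronwall on [y, z]
      have hIcc2 : Set.Icc y z ⊆ I := hI.out hyI hzI
      obtain ⟨K, hK⟩ := (isCompact_Icc (a := y) (b := z)).exists_bound_of_continuousOn
        (hqc.mono hIcc2)
      have hEy : E y = 0 := by simp [hEdef, huy, hvy]
      have hEz : E z = 0 := by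
        refine gronwall_right (E' := E') (K := 1 + K) hzy.le (hEcont.continuousOn)
          (fun t ht => hEd t (hIcc2 (Set.Ioo_subset_Icc_self ht)))
          (fun t _ => hEpos t) (fun t ht => ?_) hEy
        have := hEbound y z K hIcc2 hK t ht
        have h2 := le_abs_self (E' t)
        linarith
      have : u z = 0 := by
        simp only [hEdef] at hEz
        nlinarith [sq_nonneg (u z), sq_nonneg (v z)]
      exact huz this
  -- conclude subsingleton
  intro p hp r hr
  by_contra hne
  rcases lt_or_gt_of_ne hne with hlt | hgt
  · exact (key p r hp.1 hr.1 hp.2 hr.2 hlt).elim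
  · exact (key r p hr.1 hp.1 hr.2 hp.2 hgt).elim
end

section
/- For the Euler-type equation y'' + (1/x)y' + (k²/x²)y = 0 with 0 < k < 1/2, the naive discriminant b(x)² - 4c(x) = (1 - 4k²)/x² is strictly positive on (0, ∞), yet the solution sin(k·ln x) oscillates (has infinitely many zeros) there. -/
open Real

lemma euler_deriv1 (k : ℝ) {x : ℝ} (hx : 0 < x) :
    HasDerivAt (fun t : ℝ => Real.sin (k * Real.log t))
      (Real.cos (k * Real.log x) * (k * x⁻¹)) x := by
  have h1 : HasDerivAt (fun t : ℝ => k * Real.log t) (k * x⁻¹) x :=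
    (Real.hasDerivAt_log hx.ne').const_mul k
  exact (Real.hasDerivAt_sin _).comp x h1

lemma euler_deriv1_eq (k : ℝ) {x : ℝ} (hx : 0 < x) :
    deriv (fun t : ℝ => Real.sin (k * Real.log t)) x
      = k * Real.cos (k * Real.log x) / x := by
  rw [(euler_deriv1 k hx).deriv]; field_simp

/-- Counterexample to the naive discriminant b² - 4c: for the Euler equation
with 0 < k < 1/2, the naive discriminant (1-4k²)/x² is positive on (0,∞),
yet sin(k ln x) oscillates there. -/
theorem naive_discriminant_counterexample (k : ℝ) (hk : 0 < k) (hk2 : k < 1/2) :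
    (∀ x : ℝ, 0 < x →
        (1 / x) ^ 2 - 4 * (k ^ 2 / x ^ 2) = (1 - 4 * k ^ 2) / x ^ 2 ∧
          0 < (1 - 4 * k ^ 2) / x ^ 2) ∧
      (∀ x : ℝ, 0 < x →
        deriv (deriv (fun t : ℝ => Real.sin (k * Real.log t))) x
          + (1 / x) * deriv (fun t : ℝ => Real.sin (k * Real.log t)) x
          + (k ^ 2 / x ^ 2) * Real.sin (k * Real.log x) = 0) ∧
      {x : ℝ | 0 < x ∧ Real.sin (k * Real.log x) = 0}.Infinite := by
  refine ⟨?_, ?_, ?_⟩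
  · intro x hx
    constructor
    · field_simp
    · apply div_pos
      · nlinarith
      · positivity
  · intro x hx
    -- deriv equals g on a neighborhood
    have hev : deriv (fun t : ℝ => Real.sin (k * Real.log t))
        =ᶠ[nhds x] (fun t : ℝ => k * Real.cos (k * Real.log t) / t) := by
      filter_upwards [eventually_gt_nhds hx] with t ht
      exact euler_deriv1_eq k ht
    have hg : HasDerivAt (fun t : ℝ => k * Real.cos (k * Real.log t) / t)
        ((-Real.sin (k * Real.log x) * (k * x⁻¹) * k * x
          - k * Real.cos (k * Real.log x)) / x ^ 2) x := by
      have h1 : HasDerivAt (fun t : ℝ => k * Real.log t) (k * x⁻¹) x :=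
        (Real.hasDerivAt_log hx.ne').const_mul k
      have h2 : HasDerivAt (fun t : ℝ => k * Real.cos (k * Real.log t))
          (k * (-Real.sin (k * Real.log x) * (k * x⁻¹))) x :=
        ((Real.hasDerivAt_cos _).comp x h1).const_mul k
      have h3 := h2.div (hasDerivAt_id x) hx.ne'
      convert h3 using 1
      · rfl
      · rfl
      · rfl
      · simp only [id]; ring
    have hderiv2 : deriv (deriv (fun t : ℝ => Real.sin (k * Real.log t))) x
        = (-Real.sin (k * Real.log x) * (k * x⁻¹) * k * x
          - k * Real.cos (k * Real.log x)) / x ^ 2 := by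
      rw [Filter.EventuallyEq.deriv_eq hev, hg.deriv]
    rw [hderiv2, euler_deriv1_eq k hx]
    field_simp
    ring
  · apply Set.infinite_of_injective_forall_mem
      (f := fun n : ℕ => Real.exp (n * Real.pi / k))
    · intro m n hmn
      simp only [Real.exp_injective.eq_iff] at hmn
      have := Real.pi_pos
      field_simp at hmn
      exact_mod_cast hmn
    · intro n
      refine ⟨Real.exp_pos _, ?_⟩
      rw [Real.log_exp]
      have : k * ((n : ℝ) * Real.pi / k) = n * Real.pi := by
        field_simp
      rw [this]
      exact Real.sin_nat_mul_pi n
end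

section
/- Let n ≥ 1/2 and ε ∈ (0, 4). Every nontrivial solution of the Bessel equation y'' + (1/x)y' + (1 - n²/x²)y = 0 on (0, ∞) has infinitely many zeros on [√((4n² - 1)/(4 - ε)), ∞). -/
open Set Real

lemma sturm_pos (Q u g : ℝ → ℝ) (ω c : ℝ) (hω : 0 < ω)
    (hu : ∀ x ∈ Icc c (c + π/ω), HasDerivAt u (g x) x)
    (hg : ∀ x ∈ Icc c (c + π/ω), HasDerivAt g (-(Q x * u x)) x)
    (hQ : ∀ x ∈ Icc c (c + π/ω), ω^2 ≤ Q x)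
    (hpos : ∀ x ∈ Icc c (c + π/ω), 0 < u x) : False := by
  have hL : 0 < π/ω := div_pos Real.pi_pos hω
  set L := π/ω with hLdef
  -- Wronskian
  set W : ℝ → ℝ := fun x => u x * (ω * Real.cos (ω*(x-c))) - g x * Real.sin (ω*(x-c)) with hWdef
  have hlin : ∀ x : ℝ, HasDerivAt (fun x => ω*(x-c)) ω x := by
    intro x
    simpa using ((hasDerivAt_id x).sub_const c).const_mul ω
  have hW : ∀ x ∈ Icc c (c + L), HasDerivAt W ((Q x - ω^2) * u x * Real.sin (ω*(x-c))) x := by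
    intro x hx
    have hcos : HasDerivAt (fun x => Real.cos (ω*(x-c))) (-Real.sin (ω*(x-c)) * ω) x :=
      by have := (Real.hasDerivAt_cos (ω*(x-c))).comp x (hlin x); exact this
    have hsin : HasDerivAt (fun x => Real.sin (ω*(x-c))) (Real.cos (ω*(x-c)) * ω) x :=
      by have := (Real.hasDerivAt_sin (ω*(x-c))).comp x (hlin x); exact this
    have h := ((hu x hx).mul (hcos.const_mul ω)).sub ((hg x hx).mul hsin)
    refine h.congr_deriv ?_
    ring
  have hWc : ContinuousOn W (Icc c (c + L)) :=
    fun x hx => ((hW x hx).continuousAt).continuousWithinAt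
  have hmono : MonotoneOn W (Icc c (c + L)) := by
    apply monotoneOn_of_deriv_nonneg (convex_Icc _ _) hWc
    · intro x hx
      rw [interior_Icc] at hx
      exact ((hW x (Ioo_subset_Icc_self hx)).differentiableAt).differentiableWithinAt
    · intro x hx
      rw [interior_Icc] at hx
      have hx' := Ioo_subset_Icc_self hx
      rw [(hW x hx').deriv]
      have h1 : 0 ≤ Real.sin (ω*(x-c)) := by
        apply Real.sin_nonneg_of_nonneg_of_le_pi
        · have := hx'.1; nlinarith
        · have hxle : x - c ≤ L := by have := hx'.2; linarith
          calc ω*(x-c) ≤ ω * L := by nlinarith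
            _ = π := by rw [hLdef]; field_simp
      have h2 : 0 ≤ Q x - ω^2 := sub_nonneg.mpr (hQ x hx')
      have h3 := (hpos x hx').le
      positivity
  have hcmem : c ∈ Icc c (c + L) := left_mem_Icc.mpr (by linarith)
  have hemem : c + L ∈ Icc c (c + L) := right_mem_Icc.mpr (by linarith)
  have hWcval : W c = ω * u c := by
    simp [hWdef]
    ring
  have hWeval : W (c + L) = -(ω * u (c + L)) := by
    have harg : ω * (c + L - c) = π := by rw [hLdef]; field_simp; ring
    show u (c+L) * (ω * Real.cos (ω*(c+L-c))) - g (c+L) * Real.sin (ω*(c+L-c)) = _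
    rw [harg, Real.cos_pi, Real.sin_pi]
    ring
  have := hmono hcmem hemem (by linarith)
  have h1 := hpos c hcmem
  have h2 := hpos (c + L) hemem
  rw [hWcval, hWeval] at this
  nlinarith

lemma sturm (Q u g : ℝ → ℝ) (ω c : ℝ) (hω : 0 < ω)
    (hu : ∀ x ∈ Icc c (c + π/ω), HasDerivAt u (g x) x)
    (hg : ∀ x ∈ Icc c (c + π/ω), HasDerivAt g (-(Q x * u x)) x)
    (hQ : ∀ x ∈ Icc c (c + π/ω), ω^2 ≤ Q x) :
    ∃ z ∈ Icc c (c + π/ω), u z = 0 := by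
  by_contra hno
  push_neg at hno
  have hL : 0 < π/ω := div_pos Real.pi_pos hω
  have hcont : ContinuousOn u (Icc c (c + π/ω)) :=
    fun x hx => ((hu x hx).continuousAt).continuousWithinAt
  have hcmem : c ∈ Icc c (c + π/ω) := left_mem_Icc.mpr (by linarith)
  rcases (hno c hcmem).lt_or_gt with hneg | hpos
  · -- u c < 0: all values negative, apply sturm_pos to -u
    have hall : ∀ x ∈ Icc c (c + π/ω), u x < 0 := by
      intro x hx
      rcases (hno x hx).lt_or_gt with h | h
      · exact h
      · exfalso
        have hsub : Icc c x ⊆ Icc c (c + π/ω) := Icc_subset_Icc le_rfl hx.2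
        obtain ⟨z, hz, hz0⟩ := intermediate_value_Icc hx.1 (hcont.mono hsub)
          (⟨hneg.le, h.le⟩ : (0:ℝ) ∈ Icc (u c) (u x))
        exact hno z (hsub hz) hz0
    refine sturm_pos Q (fun x => -u x) (fun x => -g x) ω c hω
      (fun x hx => (hu x hx).neg)
      (fun x hx => ?_) hQ (fun x hx => by simpa using hall x hx)
    have := (hg x hx).neg
    refine this.congr_deriv ?_
    ring
  · have hall : ∀ x ∈ Icc c (c + π/ω), 0 < u x := by
      intro x hx
      rcases (hno x hx).lt_or_gt with h | h
      · exfalso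
        have hsub : Icc c x ⊆ Icc c (c + π/ω) := Icc_subset_Icc le_rfl hx.2
        obtain ⟨z, hz, hz0⟩ := intermediate_value_Icc' hx.1 (hcont.mono hsub)
          (⟨h.le, hpos.le⟩ : (0:ℝ) ∈ Icc (u x) (u c))
        exact hno z (hsub hz) hz0
      · exact h
    exact sturm_pos Q u g ω c hω hu hg hQ hall

/-- Bessel equation of order n ≥ 1/2: every nontrivial solution on (0,∞) has
infinitely many zeros on [√((4n²-1)/(4-ε)), ∞), for ε ∈ (0,4). -/
theorem bessel_oscillates (n ε : ℝ) (hn : 1/2 ≤ n) (hε : 0 < ε) (hε4 : ε < 4)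
    (y : ℝ → ℝ)
    (hyd : ∀ x : ℝ, 0 < x → DifferentiableAt ℝ y x ∧ DifferentiableAt ℝ (deriv y) x)
    (hode : ∀ x : ℝ, 0 < x →
      deriv (deriv y) x + (1 / x) * deriv y x + (1 - n ^ 2 / x ^ 2) * y x = 0)
    (hnt : ∃ x : ℝ, 0 < x ∧ y x ≠ 0) :
    {x : ℝ | Real.sqrt ((4 * n ^ 2 - 1) / (4 - ε)) ≤ x ∧ y x = 0}.Infinite := by
  set a := Real.sqrt ((4 * n ^ 2 - 1) / (4 - ε)) with ha
  set ω := Real.sqrt ε / 2 with hωdef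
  have hω : 0 < ω := by positivity
  have hω2 : ω^2 = ε/4 := by
    rw [hωdef, div_pow, Real.sq_sqrt hε.le]; norm_num
  have ha2 : a^2 = (4 * n ^ 2 - 1) / (4 - ε) := by
    rw [ha]
    exact Real.sq_sqrt (div_nonneg (by nlinarith) (by linarith))
  set Q : ℝ → ℝ := fun x => 1 - (4 * n ^ 2 - 1) / (4 * x ^ 2) with hQdef
  set u : ℝ → ℝ := fun x => Real.sqrt x * y x with hudef
  set g : ℝ → ℝ := fun x => (2 * Real.sqrt x)⁻¹ * y x + Real.sqrt x * deriv y x with hgdef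
  -- derivative facts
  have hu : ∀ x : ℝ, 0 < x → HasDerivAt u (g x) x := by
    intro x hx
    have h := (Real.hasDerivAt_sqrt hx.ne').mul (hyd x hx).1.hasDerivAt
    refine h.congr_deriv ?_
    rw [hgdef]
    ring
  have hg : ∀ x : ℝ, 0 < x → HasDerivAt g (-(Q x * u x)) x := by
    intro x hx
    have hs : 0 < Real.sqrt x := Real.sqrt_pos.mpr hx
    have hs2 : Real.sqrt x ^ 2 = x := Real.sq_sqrt hx.le
    have h1 : HasDerivAt (fun t => 2 * Real.sqrt t) (2 * (1 / (2 * Real.sqrt x))) x :=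
      (Real.hasDerivAt_sqrt hx.ne').const_mul 2
    have h2 : HasDerivAt (fun t => (2 * Real.sqrt t)⁻¹)
        (-(2 * (1 / (2 * Real.sqrt x))) / (2 * Real.sqrt x)^2) x :=
      h1.inv (by positivity)
    have h3 := (h2.mul (hyd x hx).1.hasDerivAt).add
      ((Real.hasDerivAt_sqrt hx.ne').mul (hyd x hx).2.hasDerivAt)
    have hyy : deriv (deriv y) x = -((1 / x) * deriv y x + (1 - n ^ 2 / x ^ 2) * y x) := by
      have := hode x hx; linarith
    refine h3.congr_deriv ?_
    simp only [hQdef, hudef]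
    rw [hyy]
    set s := Real.sqrt x with hsdef
    set Y := y x with hYdef
    set Y' := deriv y x with hY'def
    rw [← hs2]
    have hs0 : s ≠ 0 := hs.ne'
    field_simp
    ring
  -- zero of u (hence y) in every window [c, c+π/ω] with c ≥ max a 1
  have key : ∀ c : ℝ, max a 1 ≤ c → ∃ z : ℝ, a ≤ z ∧ y z = 0 ∧ c ≤ z := by
    intro c hc
    have hca : a ≤ c := le_trans (le_max_left _ _) hc
    have hc1 : (1:ℝ) ≤ c := le_trans (le_max_right _ _) hc
    have hL : 0 < π/ω := div_pos Real.pi_pos hω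
    have hmem : ∀ x ∈ Icc c (c + π/ω), 0 < x := fun x hx => by
      have := hx.1; linarith
    have hQle : ∀ x ∈ Set.Icc c (c + π/ω), ω^2 ≤ Q x := by
      intro x hx
      have hxpos : 0 < x := hmem x hx
      have hxa : a ≤ x := le_trans hca hx.1
      have hxx : a^2 ≤ x^2 := by
        have ha0 : 0 ≤ a := Real.sqrt_nonneg _
        nlinarith
      rw [ha2] at hxx
      rw [hω2, hQdef]
      have h4ε : (0:ℝ) < 4 - ε := by linarith
      rw [div_le_iff₀ h4ε] at hxx
      show ε/4 ≤ 1 - (4 * n ^ 2 - 1) / (4 * x ^ 2)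
      have hx2 : (0:ℝ) < 4 * x^2 := by positivity
      have h5 : (4*n^2-1)/(4*x^2) ≤ 1 - ε/4 := by
        rw [div_le_iff₀ hx2]; nlinarith
      linarith
    obtain ⟨z, hz, hz0⟩ := sturm Q u g ω c hω
      (fun x hx => hu x (hmem x hx))
      (fun x hx => hg x (hmem x hx)) hQle
    have hzpos : 0 < z := hmem z hz
    have hyz : y z = 0 := by
      have hs : Real.sqrt z ≠ 0 := (Real.sqrt_pos.mpr hzpos).ne'
      have h := hz0
      rw [hudef] at h
      simpa [hs] using h
    exact ⟨z, le_trans hca hz.1, hyz, hz.1⟩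
  -- conclude infinitude
  set S := {x : ℝ | a ≤ x ∧ y x = 0} with hS
  intro hfin
  obtain ⟨M, hM⟩ := hfin.bddAbove
  obtain ⟨z, hz1, hz2, hz3⟩ := key (max (max a 1) (M+1)) (le_max_left _ _)
  have : z ≤ M := hM ⟨hz1, hz2⟩
  have : M + 1 ≤ z := le_trans (le_max_right _ _) hz3
  linarith
end

section
/- The function ψ_p(x) = -5x is a particular solution of the non-homogeneous Airy-type equation y'' - xy = 5x², and for any solution ψ of this equation with ψ ≠ ψ_p, the difference ψ - ψ_p has infinitely many zeros on (-∞, -1]. -/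
open Real Set

private lemma sturm_aux (u : ℝ → ℝ) (hu : Differentiable ℝ u)
    (hu' : Differentiable ℝ (deriv u))
    (heq : ∀ x, deriv (deriv u) x = x * u x) (a : ℝ) (ha : a + Real.pi ≤ -1)
    (hpos : ∀ x ∈ Set.Icc a (a + Real.pi), 0 < u x) : False := by
  set W : ℝ → ℝ := fun x => deriv u x * Real.sin (x - a) - u x * Real.cos (x - a) with hWdef
  have hsin : ∀ x : ℝ, HasDerivAt (fun y => Real.sin (y - a)) (Real.cos (x - a)) x := by
    intro x
    have h1 : HasDerivAt (fun y : ℝ => y - a) 1 x := (hasDerivAt_id x).sub_const a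
    have := (Real.hasDerivAt_sin (x - a)).comp x h1
    rw [mul_one] at this
    exact this
  have hcos : ∀ x : ℝ, HasDerivAt (fun y => Real.cos (y - a)) (-Real.sin (x - a)) x := by
    intro x
    have h1 : HasDerivAt (fun y : ℝ => y - a) 1 x := (hasDerivAt_id x).sub_const a
    have := (Real.hasDerivAt_cos (x - a)).comp x h1
    rw [mul_one] at this
    exact this
  have hW : ∀ x : ℝ, HasDerivAt W ((x + 1) * (u x * Real.sin (x - a))) x := by
    intro x
    have h1 : HasDerivAt (deriv u) (deriv (deriv u) x) x := (hu' x).hasDerivAt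
    have h2 : HasDerivAt u (deriv u x) x := (hu x).hasDerivAt
    have := (h1.mul (hsin x)).sub (h2.mul (hcos x))
    refine this.congr_deriv ?_
    rw [heq]
    ring
  have hpi : (0:ℝ) < Real.pi := Real.pi_pos
  have hle : a ≤ a + Real.pi := by linarith
  have hant : AntitoneOn W (Set.Icc a (a + Real.pi)) := by
    apply antitoneOn_of_deriv_nonpos (convex_Icc _ _)
    · have hWdiff : Differentiable ℝ W := fun x => (hW x).differentiableAt
      exact hWdiff.continuous.continuousOn
    · intro x hx
      exact ((hW x).differentiableAt).differentiableWithinAt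
    · intro x hx
      rw [interior_Icc] at hx
      rw [(hW x).deriv]
      have hx1 : x + 1 < 0 := by linarith [hx.2]
      have hux : 0 < u x := hpos x ⟨le_of_lt hx.1, le_of_lt hx.2⟩
      have hsx : 0 < Real.sin (x - a) :=
        Real.sin_pos_of_pos_of_lt_pi (by linarith [hx.1]) (by linarith [hx.2])
      nlinarith [mul_pos hux hsx]
  have hWa : W a = -(u a) := by
    simp [hWdef]
  have hWb : W (a + Real.pi) = u (a + Real.pi) := by
    have h1 : a + Real.pi - a = Real.pi := by ring
    simp [hWdef, h1, Real.sin_pi, Real.cos_pi]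
  have hmem1 : a ∈ Set.Icc a (a + Real.pi) := ⟨le_refl _, hle⟩
  have hmem2 : a + Real.pi ∈ Set.Icc a (a + Real.pi) := ⟨hle, le_refl _⟩
  have := hant hmem1 hmem2 hle
  rw [hWa, hWb] at this
  have h1 := hpos a hmem1
  have h2 := hpos (a + Real.pi) hmem2
  linarith

private lemma sturm_zero (u : ℝ → ℝ) (hu : Differentiable ℝ u)
    (hu' : Differentiable ℝ (deriv u))
    (heq : ∀ x, deriv (deriv u) x = x * u x) (a : ℝ) (ha : a + Real.pi ≤ -1) :
    ∃ x ∈ Set.Icc a (a + Real.pi), u x = 0 := by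
  by_contra h
  push_neg at h
  have hpi : (0:ℝ) < Real.pi := Real.pi_pos
  have hle : a ≤ a + Real.pi := by linarith
  have hmem1 : a ∈ Set.Icc a (a + Real.pi) := ⟨le_refl _, hle⟩
  have hcont : ContinuousOn u (Set.Icc a (a + Real.pi)) := hu.continuous.continuousOn
  -- u has constant sign on the interval
  have hsign : (∀ x ∈ Set.Icc a (a + Real.pi), 0 < u x) ∨
      (∀ x ∈ Set.Icc a (a + Real.pi), 0 < -u x) := by
    rcases lt_or_gt_of_ne (h a hmem1) with hneg | hposa
    · right
      intro x hx
      by_contra hcon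
      push_neg at hcon
      have hux : 0 < u x := lt_of_le_of_ne (by linarith) (Ne.symm (h x hx))
      have hsub : Set.Icc a x ⊆ Set.Icc a (a + Real.pi) := Set.Icc_subset_Icc le_rfl hx.2
      have := intermediate_value_Icc hx.1 (hcont.mono hsub)
      have h0 : (0:ℝ) ∈ Set.Icc (u a) (u x) := ⟨le_of_lt hneg, le_of_lt hux⟩
      obtain ⟨c, hc, hc0⟩ := this h0
      exact h c (hsub hc) hc0
    · left
      intro x hx
      by_contra hcon
      push_neg at hcon
      have hux : u x < 0 := lt_of_le_of_ne hcon (h x hx)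
      have hsub : Set.Icc a x ⊆ Set.Icc a (a + Real.pi) := Set.Icc_subset_Icc le_rfl hx.2
      have := intermediate_value_Icc' hx.1 (hcont.mono hsub)
      have h0 : (0:ℝ) ∈ Set.Icc (u x) (u a) := ⟨le_of_lt hux, le_of_lt hposa⟩
      obtain ⟨c, hc, hc0⟩ := this h0
      exact h c (hsub hc) hc0
  rcases hsign with hp | hn
  · exact sturm_aux u hu hu' heq a ha hp
  · have hdneg : deriv (fun x => -u x) = fun x => -deriv u x := by
      funext x; exact deriv.neg
    refine sturm_aux (fun x => -u x) hu.neg ?_ ?_ a ha hn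
    · rw [hdneg]; exact hu'.neg
    · intro x
      rw [hdneg]
      have : deriv (fun x => -deriv u x) x = -deriv (deriv u) x := deriv.neg
      rw [this, heq]; ring

/-- ψp(x) = -5x is a particular solution of y'' - xy = 5x², and any other
solution ψ oscillates about ψp on (-∞, -1]. -/
theorem nonhomogeneous_airy :
    (∀ x : ℝ, deriv (deriv (fun t : ℝ => -5 * t)) x - x * (-5 * x) = 5 * x ^ 2) ∧
      (∀ ψ : ℝ → ℝ, Differentiable ℝ ψ → Differentiable ℝ (deriv ψ) →
        (∀ x, deriv (deriv ψ) x - x * ψ x = 5 * x ^ 2) →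
        ψ ≠ (fun x : ℝ => -5 * x) →
        {x : ℝ | x ≤ -1 ∧ ψ x - (-5 * x) = 0}.Infinite) := by
  constructor
  · intro x
    have h1 : deriv (fun t : ℝ => -5 * t) = fun _ : ℝ => -5 := by
      funext t
      simpa using ((hasDerivAt_id t).const_mul (-5:ℝ)).deriv
    rw [h1]
    simp
    ring
  · intro ψ hψ hψ' heq hne
    set u : ℝ → ℝ := fun x => ψ x + 5 * x with hu_def
    have hu : Differentiable ℝ u := by
      apply hψ.add
      exact (differentiable_id.const_mul 5)
    have hderiv_u : deriv u = fun x => deriv ψ x + 5 := by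
      funext x
      rw [hu_def]
      have h1 : HasDerivAt ψ (deriv ψ x) x := (hψ x).hasDerivAt
      have h2 : HasDerivAt (fun y : ℝ => 5 * y) 5 x := by
        simpa using (hasDerivAt_id x).const_mul (5:ℝ)
      exact (h1.add h2).deriv
    have hu' : Differentiable ℝ (deriv u) := by
      rw [hderiv_u]
      exact hψ'.add_const 5
    have hueq : ∀ x, deriv (deriv u) x = x * u x := by
      intro x
      rw [hderiv_u]
      have h1 : HasDerivAt (deriv ψ) (deriv (deriv ψ) x) x := (hψ' x).hasDerivAt
      have h2 : HasDerivAt (fun y => deriv ψ y + 5) (deriv (deriv ψ) x) x := by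
        simpa using h1.add_const 5
      rw [h2.deriv]
      have := heq x
      rw [hu_def]
      dsimp only
      nlinarith [heq x]
    intro hfin
    obtain ⟨b, hb⟩ := hfin.bddBelow
    set a : ℝ := min b (-1) - 1 - Real.pi with ha_def
    have hpi : (0:ℝ) < Real.pi := Real.pi_pos
    have ha : a + Real.pi ≤ -1 := by
      have := min_le_right b (-1)
      simp only [ha_def]
      linarith
    obtain ⟨x, hx, hx0⟩ := sturm_zero u hu hu' hueq a ha
    have hxS : x ∈ {x : ℝ | x ≤ -1 ∧ ψ x - (-5 * x) = 0} := by
      constructor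
      · linarith [hx.2]
      · have : u x = ψ x + 5 * x := rfl
        rw [this] at hx0
        linarith
    have := hb hxS
    have hxb : x < b := by
      have := min_le_left b (-1)
      have := hx.2
      simp only [ha_def] at this
      linarith [min_le_left b (-1)]
    linarith
end
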